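/- Let n = n_A + n_B with n_B ≥ n_A ≥ 1, let λ^A_1,…,λ^A_{n_A} > 0, λ^B_1,…,λ^B_{n_B} > 0, and d_1,…,d_{2n_A} ∈ ℝ, and let M_D be the 2n×2n real symmetric matrix M_D = [[A, D], [Dᵀ, B]], where A = diag(λ^A_1,…,λ^A_{n_A}, λ^A_1,…,λ^A_{n_A}), B = diag(λ^B_1,…,λ^B_{n_B}, λ^B_1,…,λ^B_{n_B}), and D = [[E, 0], [0, F]] with E, F the n_A×n_B matrices E_{jk} = d_j δ_{jk}, F_{jk} = d_{n_A+j} δ_{jk}. Suppose there exist a_1,…,a_{n_A} > 0 and b_1,…,b_{n_B} > 0 with λ^A_j ≤ a_j ≤ 1/λ^A_j for all j = 1,…,n_A, λ^B_k ≤ b_k ≤ 1/λ^B_k for all k = 1,…,n_B, and such that for each j = 1,…,n_A, det [[a_j − λ^A_j, −d_j], [−d_j, b_j − λ^B_j]] ≥ 0 and det [[1/a_j − λ^A_j, −d_{n_A+j}], [−d_{n_A+j}, 1/b_j − λ^B_j]] ≥ 0. Then, setting P_A = diag(a_1,…,a_{n_A}, 1/a_1,…,1/a_{n_A}) and P_B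 = diag(b_1,…,b_{n_B}, 1/b_1,…,1/b_{n_B}) (positive definite diagonal symplectic matrices in Sp(n_A) and Sp(n_B)), the matrix (P_A ⊕ P_B) − M_D is positive semidefinite; hence, if M_D is positive definite, the Werner–Wolf separability condition holds for Σ = (ħ/2)M_D⁻¹ and the corresponding Gaussian state is separable. -/

import Mathlib

open Matrix
open scoped ComplexOrder

noncomputable section

/-- The phase space index type for `ℝ^{2m}`, split as positions ⊕ momenta. -/
abbrev PS (m : ℕ) := Fin m ⊕ Fin m

/-- The standard symplectic matrix `J_m = [[0, I_m], [-I_m, 0]]`. -/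
def symplJ (m : ℕ) : Matrix (PS m) (PS m) ℝ := Matrix.fromBlocks 0 1 (-1) 0

/-- `S ∈ Sp(m)`: `Sᵀ J_m S = J_m`. -/
def IsSymplectic {m : ℕ} (S : Matrix (PS m) (PS m) ℝ) : Prop :=
  Sᵀ * symplJ m * S = symplJ m

/-- The quantum condition `Σ + (i·hbar/2) J_m ≥ 0`, i.e. the complex Hermitian matrix
`Σ + (i·hbar/2) J_m` is positive semidefinite. -/
def QuantumCond (m : ℕ) (hbar : ℝ) (Sig : Matrix (PS m) (PS m) ℝ) : Prop :=
  (Sig.map Complex.ofReal + (hbar / 2 : ℝ) • Complex.I • (symplJ m).map Complex.ofReal).PosSemidef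

/-- `μ ∈ ℂ` is an eigenvalue of the real matrix `N` (viewed as a complex matrix). -/
def IsEigenvalue {ι : Type} [Fintype ι] [DecidableEq ι] (N : Matrix ι ι ℝ) (μ : ℂ) : Prop :=
  (N.map Complex.ofReal - μ • 1).det = 0

/-- The Werner–Wolf separability condition for a covariance matrix `Σ` on
`ℝ^{2n_A} ⊕ ℝ^{2n_B}`: there exist real symmetric `Σ_A`, `Σ_B` satisfying the quantum
conditions and with `Σ - Σ_A ⊕ Σ_B` positive semidefinite.  It is necessary and sufficient
for the separability of the Gaussian state with covariance matrix `Σ`. -/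
def WernerWolf (nA nB : ℕ) (hbar : ℝ)
    (Sig : Matrix (PS nA ⊕ PS nB) (PS nA ⊕ PS nB) ℝ) : Prop :=
  ∃ (SigA : Matrix (PS nA) (PS nA) ℝ) (SigB : Matrix (PS nB) (PS nB) ℝ),
    SigA.IsSymm ∧ SigB.IsSymm ∧
    QuantumCond nA hbar SigA ∧ QuantumCond nB hbar SigB ∧
    (Sig - Matrix.fromBlocks SigA 0 0 SigB).PosSemidef

/-- The rectangular "diagonal" matrix with entries `c_j δ_{jk}`. -/
def diagRect (nA nB : ℕ) (c : Fin nA → ℝ) : Matrix (Fin nA) (Fin nB) ℝ :=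
  Matrix.of fun (j : Fin nA) (k : Fin nB) => if (j : ℕ) = (k : ℕ) then c j else 0

/-- The block `D = [[E, 0], [0, F]]` with `E_{jk} = d_j δ_{jk}`, `F_{jk} = d_{n_A+j} δ_{jk}`. -/
def blockD (nA nB : ℕ) (d : PS nA → ℝ) : Matrix (PS nA) (PS nB) ℝ :=
  Matrix.fromBlocks (diagRect nA nB fun j => d (Sum.inl j)) 0 0
    (diagRect nA nB fun j => d (Sum.inr j))

/-- The block-diagonal matrix `diag(c, c)` (in `(x, p)` ordering). -/
def blockDiagPair (m : ℕ) (c : Fin m → ℝ) : Matrix (PS m) (PS m) ℝ :=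
  Matrix.fromBlocks (Matrix.diagonal c) 0 0 (Matrix.diagonal c)

/-- The diagonal matrix `M_D = [[A, D], [Dᵀ, B]]` of the fourth criterion. -/
def matMD (nA nB : ℕ) (lamA : Fin nA → ℝ) (lamB : Fin nB → ℝ) (d : PS nA → ℝ) :
    Matrix (PS nA ⊕ PS nB) (PS nA ⊕ PS nB) ℝ :=
  Matrix.fromBlocks (blockDiagPair nA lamA) (blockD nA nB d)
    (blockD nA nB d)ᵀ (blockDiagPair nB lamB)

/-- The diagonal symplectic matrix `diag(a_1, …, a_m, 1/a_1, …, 1/a_m)`. -/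
def diagSympl (m : ℕ) (a : Fin m → ℝ) : Matrix (PS m) (PS m) ℝ :=
  Matrix.fromBlocks (Matrix.diagonal a) 0 0 (Matrix.diagonal fun j => (a j)⁻¹)


/-! ### Auxiliary lemmas -/

lemma quad_nonneg {α β d u v : ℝ} (hα : 0 ≤ α) (hβ : 0 ≤ β) (hd : d * d ≤ α * β) :
    0 ≤ α * u ^ 2 - 2 * (d * (u * v)) + β * v ^ 2 := by
  rcases eq_or_lt_of_le hα with h | h
  · have hd0 : d = 0 := by nlinarith [sq_nonneg d]
    subst hd0
    simp only [← h, zero_mul, mul_zero, zero_sub, sub_zero, neg_zero, zero_add]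
    positivity
  · nlinarith [sq_nonneg (α * u - d * v), mul_nonneg (sub_nonneg.2 hd) (sq_nonneg v)]

lemma real_posSemidef {ι : Type*} [Fintype ι] {M : Matrix ι ι ℝ} (hsymm : Mᵀ = M)
    (h : ∀ x : ι → ℝ, 0 ≤ x ⬝ᵥ (M *ᵥ x)) : M.PosSemidef := by
  refine Matrix.PosSemidef.of_dotProduct_mulVec_nonneg ?_ (fun x => by simpa using h x)
  rw [Matrix.IsHermitian, Matrix.conjTranspose_eq_transpose_of_trivial, hsymm]

lemma real_posSemidef_smul {ι : Type*} [Fintype ι] {M : Matrix ι ι ℝ} (hM : M.PosSemidef)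
    {r : ℝ} (hr : 0 ≤ r) : (r • M).PosSemidef := by
  have hsymm : Mᵀ = M := by
    have := hM.1
    rwa [Matrix.IsHermitian, Matrix.conjTranspose_eq_transpose_of_trivial] at this
  refine real_posSemidef (by rw [Matrix.transpose_smul, hsymm]) (fun x => ?_)
  rw [Matrix.smul_mulVec, dotProduct_smul, smul_eq_mul]
  exact mul_nonneg hr (by simpa using hM.dotProduct_mulVec_nonneg x)

lemma inv_sub_inv_posSemidef {ι : Type*} [Fintype ι] [DecidableEq ι] {M P : Matrix ι ι ℝ}
    (hM : M.PosDef) (hMs : Mᵀ = M) (hPs : Pᵀ = P) (hP : P.PosDef)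
    (hle : (P - M).PosSemidef) : (M⁻¹ - P⁻¹).PosSemidef := by
  have hMdet : IsUnit M.det := isUnit_iff_ne_zero.2 hM.det_pos.ne'
  have hPdet : IsUnit P.det := isUnit_iff_ne_zero.2 hP.det_pos.ne'
  have hMinv : M * M⁻¹ = 1 := Matrix.mul_nonsing_inv M hMdet
  have hPinv : P * P⁻¹ = 1 := Matrix.mul_nonsing_inv P hPdet
  have hMis : (M⁻¹)ᵀ = M⁻¹ := by rw [Matrix.transpose_nonsing_inv, hMs]
  have hPis : (P⁻¹)ᵀ = P⁻¹ := by rw [Matrix.transpose_nonsing_inv, hPs]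
  refine real_posSemidef (by rw [Matrix.transpose_sub, hMis, hPis]) (fun x => ?_)
  set y := P⁻¹ *ᵥ x with hy
  set w := y - M⁻¹ *ᵥ x with hw
  have hMx : M *ᵥ (M⁻¹ *ᵥ x) = x := by
    rw [Matrix.mulVec_mulVec, hMinv, Matrix.one_mulVec]
  have hPy : P *ᵥ y = x := by rw [hy, Matrix.mulVec_mulVec, hPinv, Matrix.one_mulVec]
  have h1 : 0 ≤ w ⬝ᵥ (M *ᵥ w) := by simpa using hM.posSemidef.dotProduct_mulVec_nonneg w
  have hsymmM : ∀ (u v : ι → ℝ), u ⬝ᵥ (M *ᵥ v) = (M *ᵥ u) ⬝ᵥ v := fun u v => by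
    rw [Matrix.dotProduct_mulVec,
      show u ᵥ* M = M *ᵥ u by rw [← Matrix.vecMul_transpose, hMs]]
  have expand : w ⬝ᵥ (M *ᵥ w) =
      y ⬝ᵥ (M *ᵥ y) - 2 * (x ⬝ᵥ y) + x ⬝ᵥ (M⁻¹ *ᵥ x) := by
    rw [hw, Matrix.mulVec_sub, sub_dotProduct, dotProduct_sub,
      dotProduct_sub]
    have e1 : y ⬝ᵥ (M *ᵥ (M⁻¹ *ᵥ x)) = x ⬝ᵥ y := by rw [hMx, dotProduct_comm]
    have e2 : (M⁻¹ *ᵥ x) ⬝ᵥ (M *ᵥ y) = x ⬝ᵥ y := by rw [hsymmM, hMx]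
    have e3 : (M⁻¹ *ᵥ x) ⬝ᵥ (M *ᵥ (M⁻¹ *ᵥ x)) = x ⬝ᵥ (M⁻¹ *ᵥ x) := by
      rw [hsymmM, hMx]
    rw [e1, e2, e3]; ring
  have h2 : y ⬝ᵥ (M *ᵥ y) ≤ x ⬝ᵥ y := by
    have := hle.dotProduct_mulVec_nonneg y
    simp only [Matrix.sub_mulVec, dotProduct_sub, star_trivial] at this
    have hyP : y ⬝ᵥ (P *ᵥ y) = x ⬝ᵥ y := by
      rw [show y ⬝ᵥ (P *ᵥ y) = (P *ᵥ y) ⬝ᵥ y from by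
        rw [Matrix.dotProduct_mulVec, show y ᵥ* P = P *ᵥ y by
          rw [← Matrix.vecMul_transpose, hPs]], hPy]
    linarith [this, hyP.le]
  have goal_eq : x ⬝ᵥ ((M⁻¹ - P⁻¹) *ᵥ x) = x ⬝ᵥ (M⁻¹ *ᵥ x) - x ⬝ᵥ y := by
    rw [Matrix.sub_mulVec, dotProduct_sub, hy]
  rw [goal_eq]
  linarith [h1, expand ▸ h1, h2]

/-! ### Structural lemmas about the matrices involved -/

lemma diagSympl_eq_diagonal (m : ℕ) (a : Fin m → ℝ) :
    diagSympl m a = Matrix.diagonal (Sum.elim a fun j => (a j)⁻¹) := by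
  ext (i|i) (j|j) <;> simp [diagSympl, Matrix.diagonal_apply, Matrix.fromBlocks]

lemma diagSympl_mul_inv (m : ℕ) (a : Fin m → ℝ) (ha : ∀ j, 0 < a j) :
    diagSympl m a * diagSympl m (fun j => (a j)⁻¹) = 1 := by
  simp only [diagSympl, Matrix.fromBlocks_multiply, Matrix.diagonal_mul_diagonal,
    Matrix.mul_zero, Matrix.zero_mul, add_zero, zero_add]
  ext (i|i) (j|j) <;>
    simp [Matrix.fromBlocks, Matrix.diagonal_apply, Matrix.one_apply,
      mul_inv_cancel₀ (ha _).ne', inv_mul_cancel₀ (ha _).ne']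

lemma diagSympl_symplectic (m : ℕ) (a : Fin m → ℝ) (ha : ∀ j, 0 < a j) :
    IsSymplectic (diagSympl m a) := by
  unfold IsSymplectic
  simp only [diagSympl, symplJ, Matrix.fromBlocks_transpose, Matrix.transpose_zero,
    Matrix.fromBlocks_multiply, Matrix.diagonal_transpose, Matrix.mul_zero, Matrix.zero_mul,
    Matrix.mul_one, Matrix.one_mul, add_zero, zero_add, Matrix.mul_neg,
    Matrix.neg_mul, Matrix.diagonal_mul_diagonal]
  ext (i|i) (j|j) <;>
    simp [Matrix.fromBlocks, Matrix.diagonal_apply, Matrix.one_apply,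
      mul_inv_cancel₀ (ha _).ne', inv_mul_cancel₀ (ha _).ne']

lemma diagSympl_posDef (m : ℕ) (a : Fin m → ℝ) (ha : ∀ j, 0 < a j) :
    (diagSympl m a).PosDef := by
  rw [diagSympl_eq_diagonal]
  refine Matrix.posDef_diagonal_iff.mpr ?_
  rintro (j | j)
  · exact ha j
  · exact inv_pos.2 (ha j)

lemma blockDiagPair_transpose (m : ℕ) (c : Fin m → ℝ) :
    (blockDiagPair m c)ᵀ = blockDiagPair m c := by
  simp [blockDiagPair, Matrix.fromBlocks_transpose]

lemma diagSympl_transpose (m : ℕ) (c : Fin m → ℝ) :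
    (diagSympl m c)ᵀ = diagSympl m c := by
  simp [diagSympl, Matrix.fromBlocks_transpose]

lemma matMD_transpose (nA nB : ℕ) (lamA : Fin nA → ℝ) (lamB : Fin nB → ℝ) (d : PS nA → ℝ) :
    (matMD nA nB lamA lamB d)ᵀ = matMD nA nB lamA lamB d := by
  rw [matMD, Matrix.fromBlocks_transpose]
  simp only [Matrix.transpose_transpose, blockDiagPair_transpose]

lemma fromBlocks_diag_diagonal {m n : ℕ} (dA : PS m → ℝ) (dB : PS n → ℝ) :
    Matrix.fromBlocks (Matrix.diagonal dA) 0 0 (Matrix.diagonal dB)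
      = Matrix.diagonal (Sum.elim dA dB) := by
  ext (i | i) (j | j) <;> simp [Matrix.diagonal_apply, Matrix.fromBlocks]

lemma diagRect_mulVec {nA nB : ℕ} (h : nA ≤ nB) (c : Fin nA → ℝ) (v : Fin nB → ℝ) :
    (diagRect nA nB c) *ᵥ v = fun j => c j * v (Fin.castLE h j) := by
  funext j
  have key : ∀ k : Fin nB, ((j : ℕ) = (k : ℕ)) = (Fin.castLE h j = k) := fun k => by
    simp [Fin.ext_iff]
  simp only [Matrix.mulVec, dotProduct, diagRect, Matrix.of_apply, key, ite_mul, zero_mul]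
  rw [Finset.sum_ite_eq Finset.univ (Fin.castLE h j) (fun k => c j * v k)]
  simp

lemma sum_castLE_le {nA nB : ℕ} (h : nA ≤ nB) (f : Fin nB → ℝ) (hf : ∀ k, 0 ≤ f k) :
    ∑ j : Fin nA, f (Fin.castLE h j) ≤ ∑ k : Fin nB, f k := by
  classical
  have : ∑ j : Fin nA, f (Fin.castLE h j)
      = ∑ k ∈ Finset.univ.map ⟨Fin.castLE h, Fin.castLE_injective h⟩, f k := by
    rw [Finset.sum_map]; rfl
  rw [this]
  exact Finset.sum_le_sum_of_subset_of_nonneg (Finset.subset_univ _) (fun k _ _ => hf k)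

lemma form_eq (nA nB : ℕ) (hAB : nA ≤ nB) (lamA : Fin nA → ℝ) (lamB : Fin nB → ℝ)
    (d : PS nA → ℝ) (a : Fin nA → ℝ) (b : Fin nB → ℝ)
    (u p : Fin nA → ℝ) (v q : Fin nB → ℝ) :
    (Sum.elim (Sum.elim u p) (Sum.elim v q)) ⬝ᵥ
      ((Matrix.fromBlocks (diagSympl nA a) 0 0 (diagSympl nB b) -
        matMD nA nB lamA lamB d) *ᵥ (Sum.elim (Sum.elim u p) (Sum.elim v q)))
    = ((∑ j, a j * u j ^ 2 + ∑ j, (a j)⁻¹ * p j ^ 2)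
        + (∑ k, b k * v k ^ 2 + ∑ k, (b k)⁻¹ * q k ^ 2))
      - (((∑ j, lamA j * u j ^ 2 + ∑ j, lamA j * p j ^ 2)
        + (∑ k, lamB k * v k ^ 2 + ∑ k, lamB k * q k ^ 2))
        + 2 * ((∑ j, d (Sum.inl j) * (u j * v (Fin.castLE hAB j)))
             + (∑ j, d (Sum.inr j) * (p j * q (Fin.castLE hAB j))))) := by
  rw [Matrix.sub_mulVec, dotProduct_sub]
  congr 1
  · rw [Matrix.fromBlocks_mulVec]
    simp only [Matrix.zero_mulVec, add_zero, zero_add, Sum.elim_comp_inl, Sum.elim_comp_inr]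
    rw [sumElim_dotProduct_sumElim]
    congr 1 <;>
    · rw [diagSympl, Matrix.fromBlocks_mulVec]
      simp only [Matrix.zero_mulVec, add_zero, zero_add, Sum.elim_comp_inl, Sum.elim_comp_inr]
      rw [sumElim_dotProduct_sumElim]
      congr 1 <;>
      · simp only [dotProduct, Matrix.mulVec_diagonal]
        exact Finset.sum_congr rfl fun j _ => by ring
  · rw [matMD, Matrix.fromBlocks_mulVec]
    simp only [Sum.elim_comp_inl, Sum.elim_comp_inr]
    rw [sumElim_dotProduct_sumElim]
    rw [dotProduct_add, dotProduct_add]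
    have hcross2 : (Sum.elim v q) ⬝ᵥ ((blockD nA nB d)ᵀ *ᵥ (Sum.elim u p))
        = (Sum.elim u p) ⬝ᵥ ((blockD nA nB d) *ᵥ (Sum.elim v q)) := by
      rw [Matrix.dotProduct_mulVec, Matrix.vecMul_transpose, dotProduct_comm]
    rw [hcross2]
    have hD : (blockD nA nB d) *ᵥ (Sum.elim v q)
        = Sum.elim (fun j => d (Sum.inl j) * v (Fin.castLE hAB j))
            (fun j => d (Sum.inr j) * q (Fin.castLE hAB j)) := by
      rw [blockD, Matrix.fromBlocks_mulVec]
      simp only [Matrix.zero_mulVec, add_zero, zero_add, Sum.elim_comp_inl, Sum.elim_comp_inr]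
      rw [diagRect_mulVec hAB, diagRect_mulVec hAB]
    rw [hD, sumElim_dotProduct_sumElim]
    have hW : ∀ (m : ℕ) (c : Fin m → ℝ) (y z : Fin m → ℝ),
        (Sum.elim y z) ⬝ᵥ ((blockDiagPair m c) *ᵥ (Sum.elim y z))
        = ∑ j, c j * y j ^ 2 + ∑ j, c j * z j ^ 2 := by
      intro m c y z
      rw [blockDiagPair, Matrix.fromBlocks_mulVec]
      simp only [Matrix.zero_mulVec, add_zero, zero_add, Sum.elim_comp_inl, Sum.elim_comp_inr]
      rw [sumElim_dotProduct_sumElim]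
      congr 1 <;>
      · simp only [dotProduct, Matrix.mulVec_diagonal]
        exact Finset.sum_congr rfl fun j _ => by ring
    rw [hW, hW]
    simp only [dotProduct]
    ring_nf
    rw [show (∑ x : Fin nA, u x * d (Sum.inl x) * v (Fin.castLE hAB x))
        = ∑ x : Fin nA, d (Sum.inl x) * u x * v (Fin.castLE hAB x) from
        Finset.sum_congr rfl fun j _ => by ring,
      show (∑ x : Fin nA, p x * d (Sum.inr x) * q (Fin.castLE hAB x))
        = ∑ x : Fin nA, d (Sum.inr x) * p x * q (Fin.castLE hAB x) from
        Finset.sum_congr rfl fun j _ => by ring]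
    ring

lemma keyPSD (nA nB : ℕ) (hAB : nA ≤ nB)
    (lamA : Fin nA → ℝ) (hlamA : ∀ j, 0 < lamA j)
    (lamB : Fin nB → ℝ) (hlamB : ∀ k, 0 < lamB k)
    (d : PS nA → ℝ)
    (a : Fin nA → ℝ) (ha : ∀ j, 0 < a j)
    (b : Fin nB → ℝ) (hb : ∀ k, 0 < b k)
    (haBound : ∀ j, lamA j ≤ a j ∧ a j ≤ 1 / lamA j)
    (hbBound : ∀ k, lamB k ≤ b k ∧ b k ≤ 1 / lamB k)
    (hdetQ : ∀ j : Fin nA, d (Sum.inl j) * d (Sum.inl j) ≤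
      (a j - lamA j) * (b (Fin.castLE hAB j) - lamB (Fin.castLE hAB j)))
    (hdetP : ∀ j : Fin nA, d (Sum.inr j) * d (Sum.inr j) ≤
      ((a j)⁻¹ - lamA j) * ((b (Fin.castLE hAB j))⁻¹ - lamB (Fin.castLE hAB j))) :
    (Matrix.fromBlocks (diagSympl nA a) 0 0 (diagSympl nB b) -
      matMD nA nB lamA lamB d).PosSemidef := by
  have hainv : ∀ j, lamA j ≤ (a j)⁻¹ := fun j => by
    have h1 := (haBound j).2
    have h2 := hlamA j
    have h3 := ha j
    rw [div_eq_mul_inv, one_mul] at h1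
    have : a j * lamA j ≤ 1 := by
      calc a j * lamA j ≤ (lamA j)⁻¹ * lamA j := by nlinarith
      _ = 1 := inv_mul_cancel₀ h2.ne'
    nlinarith [mul_inv_cancel₀ h3.ne']
  have hbinv : ∀ k, lamB k ≤ (b k)⁻¹ := fun k => by
    have h1 := (hbBound k).2
    have h2 := hlamB k
    have h3 := hb k
    rw [div_eq_mul_inv, one_mul] at h1
    have : b k * lamB k ≤ 1 := by
      calc b k * lamB k ≤ (lamB k)⁻¹ * lamB k := by nlinarith
      _ = 1 := inv_mul_cancel₀ h2.ne'
    nlinarith [mul_inv_cancel₀ h3.ne']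
  -- symmetry
  have hsym : (Matrix.fromBlocks (diagSympl nA a) 0 0 (diagSympl nB b) -
      matMD nA nB lamA lamB d)ᵀ = Matrix.fromBlocks (diagSympl nA a) 0 0 (diagSympl nB b) -
      matMD nA nB lamA lamB d := by
    rw [Matrix.transpose_sub, Matrix.fromBlocks_transpose, matMD, Matrix.fromBlocks_transpose]
    simp only [Matrix.transpose_zero, Matrix.transpose_transpose, diagSympl_transpose,
      blockDiagPair_transpose]
  refine real_posSemidef hsym (fun x => ?_)
  have hx : x = Sum.elim (Sum.elim (fun j => x (Sum.inl (Sum.inl j)))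
      (fun j => x (Sum.inl (Sum.inr j))))
      (Sum.elim (fun k => x (Sum.inr (Sum.inl k))) (fun k => x (Sum.inr (Sum.inr k)))) := by
    funext i; rcases i with (i | i) | (i | i) <;> rfl
  set u : Fin nA → ℝ := fun j => x (Sum.inl (Sum.inl j))
  set p : Fin nA → ℝ := fun j => x (Sum.inl (Sum.inr j))
  set v : Fin nB → ℝ := fun k => x (Sum.inr (Sum.inl k))
  set q : Fin nB → ℝ := fun k => x (Sum.inr (Sum.inr k))
  rw [hx, form_eq nA nB hAB lamA lamB d a b u p v q]
  -- now pure sums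
  have hf : ∀ k, 0 ≤ (b k - lamB k) * v k ^ 2 := fun k =>
    mul_nonneg (sub_nonneg.2 (hbBound k).1) (sq_nonneg _)
  have hg : ∀ k, 0 ≤ ((b k)⁻¹ - lamB k) * q k ^ 2 := fun k =>
    mul_nonneg (sub_nonneg.2 (hbinv k)) (sq_nonneg _)
  have hvb := sum_castLE_le hAB _ hf
  have hqb := sum_castLE_le hAB _ hg
  have hS1 : 0 ≤ ∑ j : Fin nA, ((a j - lamA j) * u j ^ 2
      - 2 * (d (Sum.inl j) * (u j * v (Fin.castLE hAB j)))
      + (b (Fin.castLE hAB j) - lamB (Fin.castLE hAB j)) * v (Fin.castLE hAB j) ^ 2) :=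
    Finset.sum_nonneg fun j _ => quad_nonneg (sub_nonneg.2 (haBound j).1)
      (sub_nonneg.2 (hbBound _).1) (hdetQ j)
  have hS2 : 0 ≤ ∑ j : Fin nA, (((a j)⁻¹ - lamA j) * p j ^ 2
      - 2 * (d (Sum.inr j) * (p j * q (Fin.castLE hAB j)))
      + ((b (Fin.castLE hAB j))⁻¹ - lamB (Fin.castLE hAB j)) * q (Fin.castLE hAB j) ^ 2) :=
    Finset.sum_nonneg fun j _ => quad_nonneg (sub_nonneg.2 (hainv j))
      (sub_nonneg.2 (hbinv _)) (hdetP j)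
  simp only [Finset.sum_add_distrib, Finset.sum_sub_distrib, ← Finset.mul_sum,
    sub_mul] at hS1 hS2 hvb hqb ⊢
  linarith


lemma quantum_diagSympl (m : ℕ) {hbar : ℝ} (hhb : 0 < hbar) (c : Fin m → ℝ)
    (hc : ∀ j, 0 < c j) :
    QuantumCond m hbar ((hbar / 2 : ℝ) • diagSympl m c) := by
  unfold QuantumCond
  have hmap : ((hbar / 2 : ℝ) • diagSympl m c).map Complex.ofReal
      = (hbar / 2 : ℝ) • (diagSympl m c).map Complex.ofReal := by
    ext i j
    simp [Matrix.map_apply, Matrix.smul_apply, Complex.ofReal_mul, Complex.real_smul]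
  rw [hmap, ← smul_add]
  set N0 : Matrix (PS m) (PS m) ℂ :=
    (diagSympl m c).map Complex.ofReal + Complex.I • (symplJ m).map Complex.ofReal with hN0
  have hr : (0:ℝ) ≤ hbar / 2 := by positivity
  suffices h : N0.PosSemidef by
    refine Matrix.PosSemidef.of_dotProduct_mulVec_nonneg ?_ ?_
    · have e : ((hbar / 2 : ℝ) • N0)ᴴ = (hbar / 2 : ℝ) • N0ᴴ := by
        ext i j
        simp [Matrix.conjTranspose_apply, Matrix.smul_apply, star_smul]
      rw [Matrix.IsHermitian, e, h.1]
    · intro x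
      have h2 := h.dotProduct_mulVec_nonneg x
      rw [Complex.le_def] at h2
      simp only [Complex.zero_re, Complex.zero_im] at h2
      have e : (star x) ⬝ᵥ (((hbar / 2 : ℝ) • N0) *ᵥ x)
          = (hbar / 2 : ℝ) • ((star x) ⬝ᵥ (N0 *ᵥ x)) := by
        rw [Matrix.smul_mulVec, dotProduct_smul]
      rw [e, Complex.le_def]
      refine ⟨?_, ?_⟩
      · simp only [Complex.zero_re, Complex.real_smul, Complex.mul_re, Complex.ofReal_re,
          Complex.ofReal_im, zero_mul, sub_zero]
        exact mul_nonneg hr h2.1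
      · simp only [Complex.zero_im, Complex.real_smul, Complex.mul_im, Complex.ofReal_re,
          Complex.ofReal_im, zero_mul, add_zero, ← h2.2, mul_zero]
  -- N0 is PSD
  have hSmap : (diagSympl m c).map Complex.ofReal =
      Matrix.fromBlocks (Matrix.diagonal fun j => (c j : ℂ)) 0 0
        (Matrix.diagonal fun j => ((c j)⁻¹ : ℝ)) := by
    ext (i|i) (j|j) <;>
      simp [diagSympl, Matrix.fromBlocks, Matrix.diagonal_apply, Matrix.map_apply,
        apply_ite Complex.ofReal]
  have hJmap : (symplJ m).map Complex.ofReal = Matrix.fromBlocks 0 1 (-1) 0 := by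
    ext (i|i) (j|j) <;>
      simp [symplJ, Matrix.fromBlocks, Matrix.one_apply, Matrix.map_apply,
        apply_ite Complex.ofReal]
  refine Matrix.PosSemidef.of_dotProduct_mulVec_nonneg ?_ ?_
  · have e1 : ((diagSympl m c).map Complex.ofReal)ᴴ = (diagSympl m c).map Complex.ofReal := by
      rw [hSmap]
      ext (i|i) (j|j) <;>
        (simp [Matrix.conjTranspose_apply, Matrix.fromBlocks, Matrix.diagonal_apply,
          apply_ite (starRingEnd ℂ), eq_comm] <;>
         try (split_ifs with h <;> simp [h]))
    have e2 : (Complex.I • (symplJ m).map Complex.ofReal)ᴴ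
        = Complex.I • (symplJ m).map Complex.ofReal := by
      rw [hJmap]
      ext (i|i) (j|j) <;>
        (simp [Matrix.conjTranspose_apply, Matrix.smul_apply, Matrix.fromBlocks,
          Matrix.one_apply, apply_ite (starRingEnd ℂ), Complex.conj_I, eq_comm] <;>
         try (split_ifs with h <;> simp [h]))
    exact Matrix.IsHermitian.add e1 e2
  · intro x
    have hx : x = Sum.elim (fun j => x (Sum.inl j)) (fun j => x (Sum.inr j)) := by
      funext i; rcases i with i | i <;> rfl
    set y : Fin m → ℂ := fun j => x (Sum.inl j)
    set z : Fin m → ℂ := fun j => x (Sum.inr j)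
    have hstar : star (Sum.elim y z) = Sum.elim (star y) (star z) := by
      funext i; rcases i with i | i <;> rfl
    rw [hN0, Matrix.add_mulVec, hSmap, hJmap, hx, hstar]
    rw [Matrix.fromBlocks_mulVec]
    simp only [Matrix.zero_mulVec, add_zero, zero_add, Sum.elim_comp_inl, Sum.elim_comp_inr]
    rw [Matrix.smul_mulVec, Matrix.fromBlocks_mulVec]
    simp only [Matrix.zero_mulVec, add_zero, zero_add, Matrix.one_mulVec, Matrix.neg_mulVec,
      Sum.elim_comp_inl, Sum.elim_comp_inr]
    have hcomb : ∀ (A B C D : Fin m → ℂ),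
        (Sum.elim A B) + Complex.I • (Sum.elim C D)
          = Sum.elim (A + Complex.I • C) (B + Complex.I • D) := by
      intro A B C D; funext i; rcases i with i | i <;> simp
    rw [hcomb, sumElim_dotProduct_sumElim]
    simp only [dotProduct_add, dotProduct_smul, smul_eq_mul, dotProduct,
      Pi.add_apply, Matrix.mulVec_diagonal, Pi.smul_apply, Pi.neg_apply, Pi.star_apply,
      Finset.mul_sum, ← Finset.sum_add_distrib]
    refine Finset.sum_nonneg fun j _ => ?_
    set u1 := (y j).re; set u2 := (y j).im; set v1 := (z j).re; set v2 := (z j).im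
    have hj := hc j
    have hinv : c j * (c j)⁻¹ = 1 := mul_inv_cancel₀ hj.ne'
    rw [Complex.le_def]
    constructor
    · simp only [Complex.zero_re, Complex.add_re, Complex.add_im, Complex.mul_re, Complex.mul_im,
        Complex.I_re, Complex.I_im, Complex.ofReal_re, Complex.ofReal_im,
        Complex.star_def, Complex.conj_re, Complex.conj_im, Complex.neg_re, Complex.neg_im,
        zero_mul, one_mul, zero_sub, sub_zero, mul_zero, mul_neg, neg_neg, neg_mul, zero_add,
        add_zero]
      have e1 : c j * ((c j)⁻¹ * v1 ^ 2) = v1 ^ 2 := by rw [← mul_assoc, hinv, one_mul]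
      have e2 : c j * ((c j)⁻¹ * v2 ^ 2) = v2 ^ 2 := by rw [← mul_assoc, hinv, one_mul]
      nlinarith [sq_nonneg (c j * u1 - v2), sq_nonneg (c j * u2 + v1), hj, e1, e2]
    · simp only [Complex.zero_im, Complex.add_im, Complex.add_re, Complex.mul_re, Complex.mul_im,
        Complex.I_re, Complex.I_im, Complex.ofReal_re, Complex.ofReal_im,
        Complex.star_def, Complex.conj_re, Complex.conj_im, Complex.neg_re, Complex.neg_im,
        zero_mul, one_mul, zero_sub, sub_zero, mul_zero, mul_neg, neg_neg, neg_mul, zero_add,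
        add_zero]
      ring

/-- fourth separability criterion, diagonal-block case. If there are
`a_j, b_k > 0` with `λ^A_j ≤ a_j ≤ 1/λ^A_j`, `λ^B_k ≤ b_k ≤ 1/λ^B_k` satisfying the `2×2`
determinant conditions, then the diagonal matrices `P_A = diag(a, a⁻¹)`,
`P_B = diag(b, b⁻¹)` are positive definite symplectic matrices and `(P_A ⊕ P_B) - M_D` is
positive semidefinite; hence, if `M_D` is positive definite, the Werner–Wolf separability
condition holds for `Σ = (hbar/2)M_D⁻¹` and the corresponding Gaussian state is
separable. -/
theorem statement16 (nA nB : ℕ) (hA : 1 ≤ nA) (hAB : nA ≤ nB) (hbar : ℝ) (hhb : 0 < hbar)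
    (lamA : Fin nA → ℝ) (hlamA : ∀ j, 0 < lamA j)
    (lamB : Fin nB → ℝ) (hlamB : ∀ k, 0 < lamB k)
    (d : PS nA → ℝ)
    (a : Fin nA → ℝ) (ha : ∀ j, 0 < a j)
    (b : Fin nB → ℝ) (hb : ∀ k, 0 < b k)
    (haBound : ∀ j, lamA j ≤ a j ∧ a j ≤ 1 / lamA j)
    (hbBound : ∀ k, lamB k ≤ b k ∧ b k ≤ 1 / lamB k)
    (hdetQ : ∀ j : Fin nA,
      0 ≤ (!![a j - lamA j, -(d (Sum.inl j));
              -(d (Sum.inl j)), b (Fin.castLE hAB j) - lamB (Fin.castLE hAB j)]).det)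
    (hdetP : ∀ j : Fin nA,
      0 ≤ (!![1 / a j - lamA j, -(d (Sum.inr j));
              -(d (Sum.inr j)), 1 / b (Fin.castLE hAB j) - lamB (Fin.castLE hAB j)]).det) :
    IsSymplectic (diagSympl nA a) ∧ IsSymplectic (diagSympl nB b) ∧
    (diagSympl nA a).PosDef ∧ (diagSympl nB b).PosDef ∧
    (Matrix.fromBlocks (diagSympl nA a) 0 0 (diagSympl nB b) -
      matMD nA nB lamA lamB d).PosSemidef ∧
    ((matMD nA nB lamA lamB d).PosDef →
      WernerWolf nA nB hbar ((hbar / 2) • (matMD nA nB lamA lamB d)⁻¹)) := by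
  -- convert the determinant hypotheses
  have hdetQ' : ∀ j : Fin nA, d (Sum.inl j) * d (Sum.inl j) ≤
      (a j - lamA j) * (b (Fin.castLE hAB j) - lamB (Fin.castLE hAB j)) := by
    intro j
    have h := hdetQ j
    rw [Matrix.det_fin_two_of] at h
    nlinarith [h]
  have hdetP' : ∀ j : Fin nA, d (Sum.inr j) * d (Sum.inr j) ≤
      ((a j)⁻¹ - lamA j) * ((b (Fin.castLE hAB j))⁻¹ - lamB (Fin.castLE hAB j)) := by
    intro j
    have h := hdetP j
    rw [Matrix.det_fin_two_of, one_div, one_div] at h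
    nlinarith [h]
  have hkey : (Matrix.fromBlocks (diagSympl nA a) 0 0 (diagSympl nB b) -
      matMD nA nB lamA lamB d).PosSemidef :=
    keyPSD nA nB hAB lamA hlamA lamB hlamB d a ha b hb haBound hbBound hdetQ' hdetP'
  refine ⟨diagSympl_symplectic nA a ha, diagSympl_symplectic nB b hb,
    diagSympl_posDef nA a ha, diagSympl_posDef nB b hb, hkey, ?_⟩
  intro hMD
  have hr : (0:ℝ) ≤ hbar / 2 := by positivity
  refine ⟨(hbar / 2 : ℝ) • diagSympl nA (fun j => (a j)⁻¹),
    (hbar / 2 : ℝ) • diagSympl nB (fun k => (b k)⁻¹), ?_, ?_, ?_, ?_, ?_⟩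
  · rw [Matrix.IsSymm, Matrix.transpose_smul, diagSympl_transpose]
  · rw [Matrix.IsSymm, Matrix.transpose_smul, diagSympl_transpose]
  · exact quantum_diagSympl nA hhb _ (fun j => inv_pos.2 (ha j))
  · exact quantum_diagSympl nB hhb _ (fun k => inv_pos.2 (hb k))
  · set P : Matrix (PS nA ⊕ PS nB) (PS nA ⊕ PS nB) ℝ :=
      Matrix.fromBlocks (diagSympl nA a) 0 0 (diagSympl nB b) with hPdef
    set Q : Matrix (PS nA ⊕ PS nB) (PS nA ⊕ PS nB) ℝ :=
      Matrix.fromBlocks (diagSympl nA fun j => (a j)⁻¹) 0 0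
        (diagSympl nB fun k => (b k)⁻¹) with hQdef
    have hPQ : P * Q = 1 := by
      rw [hPdef, hQdef, Matrix.fromBlocks_multiply]
      simp only [Matrix.mul_zero, Matrix.zero_mul, add_zero, zero_add,
        diagSympl_mul_inv nA a ha, diagSympl_mul_inv nB b hb]
      exact Matrix.fromBlocks_one
    have hPinv : P⁻¹ = Q := Matrix.inv_eq_right_inv hPQ
    have hfb : Matrix.fromBlocks ((hbar / 2 : ℝ) • diagSympl nA fun j => (a j)⁻¹) 0 0
        ((hbar / 2 : ℝ) • diagSympl nB fun k => (b k)⁻¹) = (hbar / 2 : ℝ) • Q := by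
      rw [hQdef, Matrix.fromBlocks_smul]
      simp only [smul_zero]
    rw [hfb, ← smul_sub]
    have hPsym : Pᵀ = P := by
      rw [hPdef, Matrix.fromBlocks_transpose]
      simp [diagSympl_transpose]
    have hMDsym := matMD_transpose nA nB lamA lamB d
    have hPpos : P.PosDef := by
      rw [hPdef, diagSympl_eq_diagonal, diagSympl_eq_diagonal, fromBlocks_diag_diagonal]
      refine Matrix.posDef_diagonal_iff.mpr ?_
      rintro ((j | j) | (k | k))
      · exact ha j
      · exact inv_pos.2 (ha j)
      · exact hb k
      · exact inv_pos.2 (hb k)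
    have hfinal : ((matMD nA nB lamA lamB d)⁻¹ - P⁻¹).PosSemidef :=
      inv_sub_inv_posSemidef hMD hMDsym hPsym hPpos hkey
    rw [hPinv] at hfinal
    exact real_posSemidef_smul hfinal hr
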